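/- For any two distinct elements x, y of a free quandle FQ(S), there exists a natural number n and a quandle homomorphism φ : FQ(S) → Conj(Sym(n)) into the conjugation quandle of the symmetric group on n letters such that φ(x) ≠ φ(y). -/

import Mathlib

open Quandles

/-- The free rack on a set `S`: pairs `(a, w)` (thought of as the conjugate
`w a w⁻¹` of the generator `a`), following Fenn–Rourke. -/
def FreeRack (S : Type u) : Type u := S × FreeGroup S

namespace FreeRack

variable {S : Type u}

/-- The element of the free group represented by the pair `(a, w)`,
namely the conjugate `w a w⁻¹` of the generator `a`. -/
def toGroup (x : FreeRack S) : FreeGroup S := x.2 * FreeGroup.of x.1 * x.2⁻¹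

instance : Rack (FreeRack S) where
  act x y := (y.1, toGroup x * y.2)
  self_distrib := by
    rintro ⟨a, w⟩ ⟨b, u⟩ ⟨c, v⟩
    refine Prod.ext rfl ?_
    show toGroup (a, w) * (toGroup (b, u) * v)
        = toGroup (b, toGroup (a, w) * u) * (toGroup (a, w) * v)
    simp only [toGroup]
    group
  invAct x y := (y.1, (toGroup x)⁻¹ * y.2)
  left_inv x y := by
    refine Prod.ext rfl ?_
    show (toGroup x)⁻¹ * (toGroup x * y.2) = y.2
    group
  right_inv x y := by
    refine Prod.ext rfl ?_
    show toGroup x * ((toGroup x)⁻¹ * y.2) = y.2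
    group

/-- The defining relation of the free quandle as a quotient of the free rack:
`(a, w) ~ (a, w · a)`. -/
def rel (p q : FreeRack S) : Prop := q = (p.1, p.2 * FreeGroup.of p.1)

theorem toGroup_of_rel {p q : FreeRack S} (h : rel p q) : toGroup p = toGroup q := by
  subst h
  rcases p with ⟨a, w⟩
  simp only [toGroup]
  group

theorem toGroup_of_eqvGen {p q : FreeRack S} (h : Relation.EqvGen rel p q) :
    toGroup p = toGroup q := by
  induction h with
  | rel a b hab => exact toGroup_of_rel hab
  | refl a => rfl
  | symm a b _ ih => exact ih.symm
  | trans a b c _ _ ih1 ih2 => exact ih1.trans ih2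

theorem fst_of_eqvGen {p q : FreeRack S} (h : Relation.EqvGen rel p q) : p.1 = q.1 := by
  induction h with
  | rel a b hab => rw [hab]
  | refl a => rfl
  | symm a b _ ih => exact ih.symm
  | trans a b c _ _ ih1 ih2 => exact ih1.trans ih2

/-- The setoid generated by the relation `(a, w) ~ (a, w · a)`. -/
instance setoid (S : Type u) : Setoid (FreeRack S) :=
  ⟨Relation.EqvGen rel, Relation.EqvGen.is_equivalence rel⟩

theorem act_eqvGen_right (p : FreeRack S) {q q' : FreeRack S}
    (h : Relation.EqvGen rel q q') : Relation.EqvGen rel (p ◃ q) (p ◃ q') := by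
  induction h with
  | rel a b hab =>
      refine Relation.EqvGen.rel _ _ ?_
      rw [hab]
      refine Prod.ext rfl ?_
      show toGroup p * (a.2 * FreeGroup.of a.1) = toGroup p * a.2 * FreeGroup.of a.1
      group
  | refl a => exact Relation.EqvGen.refl _
  | symm a b _ ih => exact Relation.EqvGen.symm _ _ ih
  | trans a b c _ _ ih1 ih2 => exact Relation.EqvGen.trans _ _ _ ih1 ih2

theorem act_eq_of_eqvGen_left {p p' : FreeRack S} (q : FreeRack S)
    (h : Relation.EqvGen rel p p') : p ◃ q = p' ◃ q := by
  show (q.1, toGroup p * q.2) = (q.1, toGroup p' * q.2)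
  rw [toGroup_of_eqvGen h]

theorem invAct_eqvGen_right (p : FreeRack S) {q q' : FreeRack S}
    (h : Relation.EqvGen rel q q') : Relation.EqvGen rel (p ◃⁻¹ q) (p ◃⁻¹ q') := by
  induction h with
  | rel a b hab =>
      refine Relation.EqvGen.rel _ _ ?_
      rw [hab]
      refine Prod.ext rfl ?_
      show (toGroup p)⁻¹ * (a.2 * FreeGroup.of a.1) = (toGroup p)⁻¹ * a.2 * FreeGroup.of a.1
      group
  | refl a => exact Relation.EqvGen.refl _
  | symm a b _ ih => exact Relation.EqvGen.symm _ _ ih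
  | trans a b c _ _ ih1 ih2 => exact Relation.EqvGen.trans _ _ _ ih1 ih2

theorem invAct_eq_of_eqvGen_left {p p' : FreeRack S} (q : FreeRack S)
    (h : Relation.EqvGen rel p p') : p ◃⁻¹ q = p' ◃⁻¹ q := by
  show (q.1, (toGroup p)⁻¹ * q.2) = (q.1, (toGroup p')⁻¹ * q.2)
  rw [toGroup_of_eqvGen h]

end FreeRack

/-- The free quandle on a set `S`: the quotient of the free rack on `S` by the
equivalence relation generated by `(a, w) ~ (a, w · a)`. -/
def FreeQuandle (S : Type u) : Type u := Quotient (FreeRack.setoid S)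

namespace FreeQuandle

variable {S : Type u}

instance : Quandle (FreeQuandle S) where
  act := Quotient.map₂ Shelf.act (by
    intro p p' hp q q' hq
    calc Shelf.act p q = Shelf.act p' q := FreeRack.act_eq_of_eqvGen_left q hp
    _ ≈ Shelf.act p' q' := FreeRack.act_eqvGen_right p' hq)
  self_distrib := by
    intro x y z
    refine Quotient.inductionOn₃ x y z (fun p q r => ?_)
    exact congrArg (Quotient.mk _) Shelf.self_distrib
  invAct := Quotient.map₂ Rack.invAct (by
    intro p p' hp q q' hq
    calc Rack.invAct p q = Rack.invAct p' q := FreeRack.invAct_eq_of_eqvGen_left q hp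
    _ ≈ Rack.invAct p' q' := FreeRack.invAct_eqvGen_right p' hq)
  left_inv := by
    intro x y
    refine Quotient.inductionOn₂ x y (fun p q => ?_)
    exact congrArg (Quotient.mk _) (Rack.left_inv p q)
  right_inv := by
    intro x y
    refine Quotient.inductionOn₂ x y (fun p q => ?_)
    exact congrArg (Quotient.mk _) (Rack.right_inv p q)
  fix := by
    intro x
    refine Quotient.inductionOn x (fun p => ?_)
    refine Quotient.sound ?_
    refine Relation.EqvGen.trans _ _ _ (Relation.EqvGen.refl _) ?_
    have h : p ◃ p = (p.1, p.2 * FreeGroup.of p.1) := by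
      refine Prod.ext rfl ?_
      show FreeRack.toGroup p * p.2 = p.2 * FreeGroup.of p.1
      simp only [FreeRack.toGroup]
      group
    rw [h]
    exact Relation.EqvGen.symm _ _ (Relation.EqvGen.rel _ _ rfl)

/-- The canonical inclusion of the generating set into the free quandle. -/
def of (a : S) : FreeQuandle S := Quotient.mk _ (a, 1)

/-- The natural map from the free quandle on `S` into the conjugation quandle
of the free group on `S`, sending the class of `(a, w)` to the conjugate
`w a w⁻¹` of the generator `a`. -/
def toConj : FreeQuandle S → Quandle.Conj (FreeGroup S) :=
  Quotient.lift FreeRack.toGroup (fun _ _ h => FreeRack.toGroup_of_eqvGen h)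

end FreeQuandle

/-!
The map `⟦(a, w)⟧ ↦ w a w⁻¹` from `FreeQuandle S` to `Conj (FreeGroup S)` is an injective
quandle homomorphism: conjugate generators of a free group are equal (compare their images in the
abelianization), and the centralizer of a generator `a` is `⟨a⟩`, which is exactly the ambiguity in
the representative `(a, w)`. So `x ≠ y` gives a nontrivial element `g` of the free group. A free
group acts on the finite set of elements whose reduced words are suffixes of that of `g`, each
generator acting by left multiplication wherever this stays inside the set; `g` moves `1` to `g`.
-/

namespace Set

variable {G : Type*} [Group G] (X : Set G) [Finite X]

open Classical in
noncomputable def mulLeftPerm (s : G) : Equiv.Perm X :=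
  Equiv.extendSubtype (p := fun x : X => s * x ∈ X) (q := fun x : X => s⁻¹ * x ∈ X)
    { toFun := fun x => ⟨⟨s * x, x.2⟩, by simp⟩
      invFun := fun y => ⟨⟨s⁻¹ * y, y.2⟩, by simp⟩
      left_inv := fun x => by simp
      right_inv := fun y => by simp }

variable {X}

theorem mulLeftPerm_apply {s : G} {x : X} (hx : s * x ∈ X) :
    (mulLeftPerm X s x : G) = s * x := by
  classical
  unfold mulLeftPerm
  rw [Equiv.extendSubtype_apply_of_mem (p := fun x : X => s * x ∈ X) _ x hx]
  rfl

theorem mulLeftPerm_symm_apply {s : G} {x : X} (hx : s⁻¹ * x ∈ X) :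
    ((mulLeftPerm X s).symm x : G) = s⁻¹ * x := by
  have hx' : s * (s⁻¹ * x) ∈ X := by simp
  have : mulLeftPerm X s ⟨s⁻¹ * x, hx⟩ = x :=
    Subtype.ext ((mulLeftPerm_apply hx').trans (mul_inv_cancel_left s x))
  rw [(Equiv.symm_apply_eq _).2 this.symm]

end Set

namespace FreeGroup

variable {α : Type*}

theorem eq_of_isConj_of {a b : α} (h : IsConj (of a) (of b)) : a = b :=
  FreeAbelianGroup.of_injective <| congrArg Additive.ofMul <|
    isConj_iff_eq.1 (Abelianization.of.map_isConj h)

theorem toWord_mk_of_isInfix [DecidableEq α] {L : List (α × Bool)} {g : FreeGroup α}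
    (h : L <:+: g.toWord) : (mk L).toWord = L :=
  toWord_mk.trans (isReduced_toWord.infix h).reduce_eq

theorem toWord_of_mul [DecidableEq α] {a : α} {c : FreeGroup α}
    (h : ∀ w, c.toWord ≠ (a, false) :: w) : (of a * c).toWord = (a, true) :: c.toWord := by
  rw [toWord_mul, toWord_of, List.singleton_append]
  refine IsReduced.reduce_eq ?_
  cases hc : c.toWord with
  | nil => exact IsReduced.singleton
  | cons y w =>
    refine isReduced_cons_cons.2 ⟨fun hy => ?_, hc ▸ isReduced_toWord⟩
    obtain ⟨y₁, y₂⟩ := y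
    obtain rfl : a = y₁ := hy
    cases y₂
    · exact absurd hc (h w)
    · rfl

theorem toWord_mul_of [DecidableEq α] {a : α} {c : FreeGroup α}
    (h : ∀ w, c.toWord ≠ w ++ [(a, false)]) : (c * of a).toWord = c.toWord ++ [(a, true)] := by
  rw [toWord_mul, toWord_of]
  refine IsReduced.reduce_eq (List.isChain_append.2 ⟨isReduced_toWord, IsReduced.singleton, ?_⟩)
  rintro ⟨y₁, y₂⟩ hy z hz (hy₁ : y₁ = z.1)
  obtain rfl : (a, true) = z := Option.some.inj hz
  subst hy₁
  obtain ⟨w, hw⟩ := List.getLast?_eq_some_iff.1 hy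
  cases y₂
  · exact absurd hw (h w)
  · rfl

theorem mem_zpowers_of_commute_of {a : α} {c : FreeGroup α} (h : Commute c (of a)) :
    c ∈ Subgroup.zpowers (of a) := by
  classical
  induction hn : c.toWord.length using Nat.strong_induction_on generalizing c with
  | _ n ih =>
  by_cases hhead : ∃ w, c.toWord = (a, false) :: w
  · obtain ⟨w, hw⟩ := hhead
    have hd : of a * c = mk w := by
      rw [← mk_toWord (x := c), hw, ← List.singleton_append, ← mul_mk, ← mul_assoc]
      exact mul_inv_cancel_left (of a) (mk w)
    have hdw : (mk w).toWord = w := toWord_mk_of_isInfix (hw ▸ (List.suffix_cons _ w).isInfix)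
    have hd_mem : of a * c ∈ Subgroup.zpowers (of a) :=
      ih w.length (by simp [← hn, hw]) ((Commute.refl _).mul_left h) (by rw [hd, hdw])
    simpa using Subgroup.mul_mem _ (Subgroup.inv_mem _ (Subgroup.mem_zpowers (of a))) hd_mem
  by_cases htail : ∃ w, c.toWord = w ++ [(a, false)]
  · obtain ⟨w, hw⟩ := htail
    have hd : c * of a = mk w := by
      rw [← mk_toWord (x := c), hw, ← mul_mk]
      exact inv_mul_cancel_right (mk w) (of a)
    have hdw : (mk w).toWord = w := toWord_mk_of_isInfix (hw ▸ (List.prefix_append _ _).isInfix)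
    have hd_mem : c * of a ∈ Subgroup.zpowers (of a) :=
      ih w.length (by simp [← hn, hw]) (h.mul_left (Commute.refl _)) (by rw [hd, hdw])
    simpa using Subgroup.mul_mem _ hd_mem (Subgroup.inv_mem _ (Subgroup.mem_zpowers (of a)))
  -- With no cancellation on either side, `a c = c a` says that the word of `c` is fixed by
  -- rotation once `a` is prepended, so it is a power of `a`.
  push Not at hhead htail
  have hleft := toWord_of_mul hhead
  have hright := toWord_mul_of htail
  have hrot : ((a, true) :: c.toWord).rotate 1 = (a, true) :: c.toWord := by
    rw [List.rotate_cons_succ, List.rotate_zero, ← hright, h.eq, hleft]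
  have : Nonempty (α × Bool) := ⟨(a, true)⟩
  obtain ⟨x, hx⟩ := List.rotate_one_eq_self_iff_eq_replicate.1 hrot
  rw [List.length_cons, List.replicate_succ, List.cons.injEq] at hx
  obtain ⟨rfl, hc⟩ := hx
  rw [← toWord_injective ((toWord_of_pow a _).trans hc.symm)]
  exact Subgroup.npow_mem_zpowers _ _

section Suffixes

variable [DecidableEq α]

def suffixes (g : FreeGroup α) : Set (FreeGroup α) := {h | h.toWord <:+ g.toWord}

instance (g : FreeGroup α) : Finite g.suffixes :=
  Set.Finite.to_subtype <| ((List.finite_toSet g.toWord.tails).preimage toWord_injective.injOn).subset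
    fun _ => (List.mem_tails _ _).2

noncomputable def suffixAction (g : FreeGroup α) : FreeGroup α →* Equiv.Perm g.suffixes :=
  lift fun a => g.suffixes.mulLeftPerm (of a)

theorem mk_mem_suffixes {g : FreeGroup α} {L : List (α × Bool)} (h : L <:+ g.toWord) :
    mk L ∈ g.suffixes := by
  show (mk L).toWord <:+ g.toWord
  rwa [toWord_mk_of_isInfix h.isInfix]

theorem one_mem_suffixes (g : FreeGroup α) : 1 ∈ g.suffixes :=
  mk_mem_suffixes List.nil_suffix

theorem suffixAction_mk_apply_one {g : FreeGroup α} {L : List (α × Bool)} (hL : L <:+ g.toWord) :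
    (suffixAction g (mk L) ⟨1, one_mem_suffixes g⟩ : FreeGroup α) = mk L := by
  induction L with
  | nil => simp [← one_eq_mk]
  | cons x L ih =>
    obtain ⟨a, b⟩ := x
    have hL' : L <:+ g.toWord := (List.suffix_cons _ L).trans hL
    have hmem := mk_mem_suffixes hL
    rw [← List.singleton_append, ← mul_mk, _root_.map_mul, Equiv.Perm.mul_apply,
      show suffixAction g (mk L) _ = ⟨mk L, mk_mem_suffixes hL'⟩ from
        Subtype.ext (ih hL')]
    cases b with
    | true =>
      rw [show mk [(a, true)] = of a from rfl, suffixAction, lift_apply_of]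
      exact Set.mulLeftPerm_apply hmem
    | false =>
      rw [show mk [(a, false)] = (of a)⁻¹ from rfl, _root_.map_inv, suffixAction, lift_apply_of]
      exact Set.mulLeftPerm_symm_apply hmem

theorem suffixAction_self_ne_one {g : FreeGroup α} (hg : g ≠ 1) : suffixAction g g ≠ 1 := by
  intro h
  have := suffixAction_mk_apply_one (List.suffix_refl g.toWord)
  rw [mk_toWord, h] at this
  exact hg this.symm

end Suffixes

theorem exists_monoidHom_perm_fin_ne_one {g : FreeGroup α} (hg : g ≠ 1) :
    ∃ (n : ℕ) (f : FreeGroup α →* Equiv.Perm (Fin n)), f g ≠ 1 := by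
  classical
  refine ⟨_, (Finite.equivFin g.suffixes).permCongrHom.toMonoidHom.comp g.suffixAction, ?_⟩
  rw [MonoidHom.comp_apply, MulEquiv.coe_toMonoidHom, ne_eq, MulEquiv.map_eq_one_iff]
  exact suffixAction_self_ne_one hg

end FreeGroup

namespace FreeRack

variable {S : Type u}

theorem toGroup_act (p q : FreeRack S) :
    toGroup (p ◃ q) = toGroup p * toGroup q * (toGroup p)⁻¹ := by
  show toGroup (q.1, toGroup p * q.2) = _
  simp only [toGroup]
  group

theorem eqvGen_rel_mul_zpow (a : S) (w : FreeGroup S) (k : ℤ) :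
    Relation.EqvGen rel (a, w) (a, w * FreeGroup.of a ^ k) := by
  induction k using Int.induction_on with
  | zero => rw [zpow_zero, mul_one]; exact .refl _
  | succ i ih =>
    refine ih.trans _ _ _ (.rel _ _ (Prod.ext rfl ?_))
    show w * FreeGroup.of a ^ ((i : ℤ) + 1) = w * FreeGroup.of a ^ (i : ℤ) * FreeGroup.of a
    rw [zpow_add_one, mul_assoc]
  | pred i ih =>
    refine ih.trans _ _ _ (.symm _ _ (.rel _ _ (Prod.ext rfl ?_)))
    show w * _ = w * _ * _
    rw [mul_assoc, ← zpow_add_one, sub_add_cancel]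

end FreeRack

namespace FreeQuandle

variable {S : Type u}

def toConjHom : FreeQuandle S →◃ Quandle.Conj (FreeGroup S) where
  toFun := toConj
  map_act' {x y} := Quotient.inductionOn₂ x y FreeRack.toGroup_act

theorem toConj_injective :
    Function.Injective (toConj : FreeQuandle S → Quandle.Conj (FreeGroup S)) := by
  refine Quotient.ind₂ fun ⟨a, w⟩ ⟨b, u⟩ h => ?_
  change w * FreeGroup.of a * w⁻¹ = u * FreeGroup.of b * u⁻¹ at h
  obtain rfl : a = b := by
    refine FreeGroup.eq_of_isConj_of (isConj_iff.2 ⟨u⁻¹ * w, ?_⟩)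
    calc u⁻¹ * w * FreeGroup.of a * (u⁻¹ * w)⁻¹
        = u⁻¹ * (w * FreeGroup.of a * w⁻¹) * u := by group
      _ = FreeGroup.of b := by rw [h]; group
  have hcomm : Commute (w⁻¹ * u) (FreeGroup.of a) :=
    calc w⁻¹ * u * FreeGroup.of a = w⁻¹ * (u * FreeGroup.of a * u⁻¹) * u := by group
      _ = FreeGroup.of a * (w⁻¹ * u) := by rw [← h]; group
  obtain ⟨k, hk⟩ := Subgroup.mem_zpowers_iff.1 (FreeGroup.mem_zpowers_of_commute_of hcomm)
  rw [show u = w * FreeGroup.of a ^ k by rw [hk, mul_inv_cancel_left]]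
  exact Quotient.sound (FreeRack.eqvGen_rel_mul_zpow a w k)

end FreeQuandle

/-- Any two distinct elements of a free quandle can be separated by a quandle
homomorphism into the conjugation quandle of some symmetric group. -/
theorem freeQuandle_separated_by_symmetric_group (S : Type)
    (x y : FreeQuandle S) (hxy : x ≠ y) :
    ∃ (n : ℕ) (φ : FreeQuandle S →◃ Quandle.Conj (Equiv.Perm (Fin n))),
      φ x ≠ φ y := by
  have hg : FreeQuandle.toConj x * (FreeQuandle.toConj y)⁻¹ ≠ 1 :=
    mul_inv_eq_one.not.2 (FreeQuandle.toConj_injective.ne hxy)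
  obtain ⟨n, f, hf⟩ := FreeGroup.exists_monoidHom_perm_fin_ne_one hg
  refine ⟨n, (Quandle.Conj.map f).comp FreeQuandle.toConjHom, fun h => hf ?_⟩
  rw [map_mul, map_inv, mul_inv_eq_one]
  exact h
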